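/- For any 2×2 density matrices ρ_{x0x1} (four qubit preparations indexed by x0x1 ∈ {0,1}²) and any two Hermitian operators M_0, M_1 on ℂ² with eigenvalues in [−1,1], the nonlinear dimension witness W, defined as the determinant of the matrix with rows indexed by y and columns by the pairs (00,01) and (10,11), with entries p(0|00,y) − p(0|01,y) and p(0|10,y) − p(0|11,y) where p(0|x0x1,y) = Tr(ρ_{x0x1}(I + M_y)/2), satisfies |W| ≤ 1. -/

import Mathlib

open Matrix ComplexOrder

/-- p(0|x0x1,y) = Tr(ρ_{x0x1} (I + M_y)/2). -/
noncomputable def prob0 (ρ : Fin 2 → Fin 2 → Matrix (Fin 2) (Fin 2) ℂ)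
    (M : Fin 2 → Matrix (Fin 2) (Fin 2) ℂ) (x0 x1 y : Fin 2) : ℝ :=
  (Matrix.trace (ρ x0 x1 * ((1/2 : ℂ) • (1 + M y)))).re

/-- The nonlinear dimension witness W of Bowles–Quintino–Brunner. -/
noncomputable def Wwitness (ρ : Fin 2 → Fin 2 → Matrix (Fin 2) (Fin 2) ℂ)
    (M : Fin 2 → Matrix (Fin 2) (Fin 2) ℂ) : ℝ :=
  (prob0 ρ M 0 0 0 - prob0 ρ M 0 1 0) * (prob0 ρ M 1 0 1 - prob0 ρ M 1 1 1) -
    (prob0 ρ M 1 0 0 - prob0 ρ M 1 1 0) * (prob0 ρ M 0 0 1 - prob0 ρ M 0 1 1)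

/-! The two differences p(0|x0 0, y) − p(0|x0 1, y) are the dot products `P x0 ⬝ᵥ Q y` of
real 3-vectors: `Q y` is the Pauli (Bloch) vector of `M y` and `P x0` the difference of the
halved Bloch vectors of `ρ x0 0` and `ρ x0 1`. Positivity makes all four vectors of length at
most one, and by the Binet–Cauchy identity `W = (P 0 ⨯₃ P 1) ⬝ᵥ (Q 0 ⨯₃ Q 1)`, whose absolute
value is at most `|P 0| |P 1| |Q 0| |Q 1| ≤ 1`. -/

theorem dotProduct_self_nonneg_of_real {n : Type*} [Fintype n] (v : n → ℝ) : 0 ≤ v ⬝ᵥ v := by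
  simpa using dotProduct_self_star_nonneg v

theorem cross_dotProduct_cross_self_le (u v : Fin 3 → ℝ) :
    u ⨯₃ v ⬝ᵥ u ⨯₃ v ≤ (u ⬝ᵥ u) * (v ⬝ᵥ v) := by
  rw [cross_dot_cross, dotProduct_comm v u]
  nlinarith [sq_nonneg (u ⬝ᵥ v)]

theorem sq_dotProduct_le (u v : Fin 3 → ℝ) : (u ⬝ᵥ v) ^ 2 ≤ (u ⬝ᵥ u) * (v ⬝ᵥ v) := by
  have hLagrange := cross_dot_cross u v u v
  rw [dotProduct_comm v u] at hLagrange
  nlinarith [dotProduct_self_nonneg_of_real (u ⨯₃ v)]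

theorem abs_dotProduct_mul_sub_le_one {P₀ P₁ Q₀ Q₁ : Fin 3 → ℝ}
    (hP₀ : P₀ ⬝ᵥ P₀ ≤ 1) (hP₁ : P₁ ⬝ᵥ P₁ ≤ 1) (hQ₀ : Q₀ ⬝ᵥ Q₀ ≤ 1) (hQ₁ : Q₁ ⬝ᵥ Q₁ ≤ 1) :
    |P₀ ⬝ᵥ Q₀ * (P₁ ⬝ᵥ Q₁) - P₀ ⬝ᵥ Q₁ * (P₁ ⬝ᵥ Q₀)| ≤ 1 := by
  have hP : P₀ ⨯₃ P₁ ⬝ᵥ P₀ ⨯₃ P₁ ≤ 1 :=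
    (cross_dotProduct_cross_self_le P₀ P₁).trans
      (mul_le_one₀ hP₀ (dotProduct_self_nonneg_of_real P₁) hP₁)
  have hQ : Q₀ ⨯₃ Q₁ ⬝ᵥ Q₀ ⨯₃ Q₁ ≤ 1 :=
    (cross_dotProduct_cross_self_le Q₀ Q₁).trans
      (mul_le_one₀ hQ₀ (dotProduct_self_nonneg_of_real Q₁) hQ₁)
  rw [← cross_dot_cross, ← sq_le_one_iff_abs_le_one]
  exact (sq_dotProduct_le _ _).trans (mul_le_one₀ hP (dotProduct_self_nonneg_of_real _) hQ)

namespace Matrix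

variable {A B : Matrix (Fin 2) (Fin 2) ℂ}

/-- For Hermitian `A = a₀ • 1 + a • (σ_z, σ_x, σ_y)` this is the vector `a`. -/
noncomputable def pauliVec (A : Matrix (Fin 2) (Fin 2) ℂ) : Fin 3 → ℝ :=
  ![((A 0 0).re - (A 1 1).re) / 2, (A 0 1).re, -(A 0 1).im]

theorem IsHermitian.fin_two_entries (hA : A.IsHermitian) :
    A 1 0 = star (A 0 1) ∧ (A 0 0).im = 0 ∧ (A 1 1).im = 0 := by
  refine ⟨(hA.apply 1 0).symm, ?_, ?_⟩ <;>
    simpa using congrArg Complex.im (hA.coe_re_apply_self _).symm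

theorem IsHermitian.re_trace_mul (hA : A.IsHermitian) (hB : B.IsHermitian) :
    (A * B).trace.re = A.trace.re * B.trace.re / 2 + 2 * pauliVec A ⬝ᵥ pauliVec B := by
  obtain ⟨hA10, hA00, hA11⟩ := hA.fin_two_entries
  obtain ⟨hB10, hB00, hB11⟩ := hB.fin_two_entries
  simp only [trace_fin_two, mul_apply, Fin.sum_univ_two, hA10, hB10, RCLike.star_def,
    Complex.add_re, Complex.mul_re, Complex.conj_re, Complex.conj_im, hA00, hA11, hB00, hB11,
    pauliVec, dotProduct_cons, head_cons, tail_cons, dotProduct_of_isEmpty]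
  ring

theorem PosSemidef.normSq_apply_zero_one_le (hA : A.PosSemidef) :
    Complex.normSq (A 0 1) ≤ (A 0 0).re * (A 1 1).re := by
  obtain ⟨hA10, hA00, hA11⟩ := hA.isHermitian.fin_two_entries
  have hdet := (Complex.le_def.mp hA.det_nonneg).1
  simp only [Complex.zero_re, det_fin_two, hA10, RCLike.star_def, Complex.sub_re,
    Complex.mul_re, hA00, hA11, Complex.conj_re, Complex.conj_im] at hdet
  rw [Complex.normSq_apply]
  linarith

theorem PosSemidef.pauliVec_dotProduct_self_le (hA : A.PosSemidef) :
    pauliVec A ⬝ᵥ pauliVec A ≤ (A.trace.re / 2) ^ 2 := by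
  have hoff := hA.normSq_apply_zero_one_le
  rw [Complex.normSq_apply] at hoff
  simp only [pauliVec, dotProduct_cons, head_cons, tail_cons, dotProduct_of_isEmpty,
    trace_fin_two, Complex.add_re]
  nlinarith

theorem PosSemidef.re_trace_nonneg (hA : A.PosSemidef) : 0 ≤ A.trace.re :=
  (Complex.le_def.mp hA.trace_nonneg).1

theorem pauliVec_one_add : pauliVec (1 + A) = pauliVec A := by
  ext i; fin_cases i <;> simp [pauliVec]

theorem pauliVec_one_sub : pauliVec (1 - A) = -pauliVec A := by
  ext i; fin_cases i <;> simp [pauliVec]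
  ring

theorem pauliVec_sub_dotProduct_self_le_one (hA : A.PosSemidef) (hB : B.PosSemidef)
    (htA : A.trace = 1) (htB : B.trace = 1) :
    (pauliVec A - pauliVec B) ⬝ᵥ (pauliVec A - pauliVec B) ≤ 1 := by
  have hA' := hA.pauliVec_dotProduct_self_le
  have hB' := hB.pauliVec_dotProduct_self_le
  have hsum := dotProduct_self_nonneg_of_real (pauliVec A + pauliVec B)
  simp only [htA, htB, Complex.one_re] at hA' hB'
  simp only [sub_dotProduct, dotProduct_sub, add_dotProduct, dotProduct_add,
    dotProduct_comm (pauliVec B) (pauliVec A)] at hsum ⊢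
  linarith

theorem pauliVec_dotProduct_self_le_one (h₁ : (1 - A).PosSemidef) (h₂ : (1 + A).PosSemidef) :
    pauliVec A ⬝ᵥ pauliVec A ≤ 1 := by
  have hsub := h₁.pauliVec_dotProduct_self_le
  have hadd := h₂.pauliVec_dotProduct_self_le
  have htsub := h₁.re_trace_nonneg
  have htadd := h₂.re_trace_nonneg
  rw [pauliVec_one_sub, neg_dotProduct, dotProduct_neg, neg_neg] at hsub
  rw [pauliVec_one_add] at hadd
  simp only [trace_sub, trace_add, trace_one, Fintype.card_fin, Nat.cast_ofNat,
    Complex.sub_re, Complex.add_re, Complex.re_ofNat] at hsub hadd htsub htadd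
  rcases le_total 0 A.trace.re with ht | ht <;> nlinarith

end Matrix

theorem prob0_eq {ρ : Fin 2 → Fin 2 → Matrix (Fin 2) (Fin 2) ℂ}
    {M : Fin 2 → Matrix (Fin 2) (Fin 2) ℂ} {x0 x1 y : Fin 2}
    (hρ : (ρ x0 x1).IsHermitian) (htr : (ρ x0 x1).trace = 1) (hM : (M y).IsHermitian) :
    prob0 ρ M x0 x1 y = 1 / 2 + (M y).trace.re / 4 + pauliVec (ρ x0 x1) ⬝ᵥ pauliVec (M y) := by
  rw [prob0, mul_smul_comm, trace_smul, mul_add, mul_one, trace_add, htr, smul_eq_mul]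
  norm_num [hρ.re_trace_mul hM, htr]
  ring

theorem nonlinear_dimension_witness_bound
    (ρ : Fin 2 → Fin 2 → Matrix (Fin 2) (Fin 2) ℂ)
    (hρpsd : ∀ x0 x1, (ρ x0 x1).PosSemidef)
    (hρtr : ∀ x0 x1, Matrix.trace (ρ x0 x1) = 1)
    (M : Fin 2 → Matrix (Fin 2) (Fin 2) ℂ)
    (hMherm : ∀ y, (M y).IsHermitian)
    (hMub : ∀ y, ((1 : Matrix (Fin 2) (Fin 2) ℂ) - M y).PosSemidef)
    (hMlb : ∀ y, ((1 : Matrix (Fin 2) (Fin 2) ℂ) + M y).PosSemidef) :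
    |Wwitness ρ M| ≤ 1 := by
  set P : Fin 2 → Fin 3 → ℝ := fun x0 => pauliVec (ρ x0 0) - pauliVec (ρ x0 1)
  set Q : Fin 2 → Fin 3 → ℝ := fun y => pauliVec (M y)
  have hP x0 : P x0 ⬝ᵥ P x0 ≤ 1 :=
    pauliVec_sub_dotProduct_self_le_one (hρpsd x0 0) (hρpsd x0 1) (hρtr x0 0) (hρtr x0 1)
  have hQ y : Q y ⬝ᵥ Q y ≤ 1 := pauliVec_dotProduct_self_le_one (hMub y) (hMlb y)
  have hdiff x0 y : prob0 ρ M x0 0 y - prob0 ρ M x0 1 y = P x0 ⬝ᵥ Q y := by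
    rw [prob0_eq (hρpsd x0 0).isHermitian (hρtr x0 0) (hMherm y),
      prob0_eq (hρpsd x0 1).isHermitian (hρtr x0 1) (hMherm y), sub_dotProduct]
    ring
  have hW : Wwitness ρ M = P 0 ⬝ᵥ Q 0 * (P 1 ⬝ᵥ Q 1) - P 0 ⬝ᵥ Q 1 * (P 1 ⬝ᵥ Q 0) := by
    rw [Wwitness, hdiff, hdiff, hdiff, hdiff]
    ring
  rw [hW]
  exact abs_dotProduct_mul_sub_le_one (hP 0) (hP 1) (hQ 0) (hQ 1)
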